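/- For every d ∈ ℕ and every j ∈ {1, …, 2d+1}, the product over all i ∈ {1, …, 2d+1} with i ≠ j of i²/(i² − j²) has absolute value at most 2; that is, |∏_{i∈{1,…,2d+1}, i≠j} i²/(i² − j²)| ≤ 2. -/

import Mathlib

/-!
Factor `i² / (i² - j²) = i / (i - j) · i / (i + j)`. Over `i ∈ [1, n] \ {j}` the first factors
have absolute values multiplying to `C(n, j)` (those with `i < j` cancel in pairs `i ↔ j - i`),
and the second multiply to `2 / C(n + j, j)` (the missing factor `i = j` is `1/2`). Hence the
product has absolute value `2 C(n, j) / C(n + j, j) ≤ 2`.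
-/

open Finset

section Field

variable {K : Type*} [Field K] [CharZero K]

theorem prod_Icc_add_div_self_eq_choose (m j : ℕ) :
    ∏ k ∈ Icc 1 m, ((k + j : K) / k) = (m + j).choose j := by
  induction m with
  | zero => simp
  | succ m ih =>
    have hchoose := Nat.choose_mul_succ_eq (m + j) j
    rw [show m + j + 1 - j = m + 1 by omega, show m + j + 1 = m + 1 + j by omega] at hchoose
    rw [prod_Icc_succ_top (by omega), ih, mul_div_assoc',
      div_eq_iff (Nat.cast_ne_zero.mpr m.succ_ne_zero)]
    exact_mod_cast hchoose

theorem prod_Icc_div_sub_eq_choose {j n : ℕ} (hjn : j ≤ n) :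
    ∏ i ∈ Icc (j + 1) n, ((i : K) / (i - j)) = n.choose j := by
  obtain ⟨m, rfl⟩ := Nat.exists_eq_add_of_le' hjn
  rw [add_comm j 1, ← map_add_right_Icc, prod_map, ← prod_Icc_add_div_self_eq_choose]
  refine prod_congr rfl fun k _ => ?_
  simp

theorem prod_Ico_div_sub_eq_one (j : ℕ) : ∏ i ∈ Ico 1 j, ((i : K) / (j - i)) = 1 := by
  have hreflect : ∏ i ∈ Ico 1 j, ((j : K) - i) = ∏ i ∈ Ico 1 j, (i : K) := by
    have h := prod_Ico_reflect (fun i : ℕ => (i : K)) 1 (Nat.le_succ j)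
    rw [Nat.add_sub_cancel_left, Nat.add_sub_cancel] at h
    rw [← h]
    refine prod_congr rfl fun i hi => ?_
    rw [Nat.cast_sub (mem_Ico.mp hi).2.le]
  rw [prod_div_distrib, hreflect, div_self]
  exact prod_ne_zero_iff.mpr fun i hi => Nat.cast_ne_zero.mpr (by simp only [mem_Ico] at hi; omega)

theorem prod_erase_div_add_eq_two_div_choose {j n : ℕ} (hj1 : 1 ≤ j) (hjn : j ≤ n) :
    ∏ i ∈ (Icc 1 n).erase j, ((i : K) / (i + j)) = 2 / (n + j).choose j := by
  have hj : (j : K) ≠ 0 := Nat.cast_ne_zero.mpr (by omega)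
  have hall : ∏ i ∈ Icc 1 n, ((i : K) / (i + j)) = ((n + j).choose j : K)⁻¹ := by
    simp_rw [← prod_Icc_add_div_self_eq_choose, ← prod_inv_distrib, inv_div]
  have hhalf : (j : K) / (j + j) = 2⁻¹ := by rw [← two_mul, div_mul_cancel_right₀ hj]
  rw [← mul_prod_erase _ _ (mem_Icc.mpr ⟨hj1, hjn⟩), hhalf] at hall
  rw [div_eq_mul_inv, ← hall, ← mul_assoc, mul_inv_cancel₀ two_ne_zero, one_mul]

end Field

section LinearOrderedField

variable {K : Type*} [Field K] [LinearOrder K] [IsStrictOrderedRing K]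

theorem prod_erase_abs_div_sub_eq_choose {j n : ℕ} (hjn : j ≤ n) :
    ∏ i ∈ (Icc 1 n).erase j, |(i : K) / (i - j)| = n.choose j := by
  have hsplit : (Icc 1 n).erase j = Ico 1 j ∪ Icc (j + 1) n := by
    ext i; simp only [mem_erase, mem_Icc, mem_Ico, mem_union]; omega
  have hdisj : Disjoint (Ico 1 j) (Icc (j + 1) n) :=
    disjoint_left.mpr fun i hi hi' => by simp only [mem_Ico, mem_Icc] at hi hi'; omega
  rw [hsplit, prod_union hdisj, ← one_mul (n.choose j : K), ← prod_Ico_div_sub_eq_one j,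
    ← prod_Icc_div_sub_eq_choose hjn]
  congr 1 <;> refine prod_congr rfl fun i hi => ?_ <;> rw [abs_div, Nat.abs_cast]
  · rw [abs_sub_comm, abs_of_nonneg (sub_nonneg.mpr (Nat.cast_le.mpr (mem_Ico.mp hi).2.le))]
  · rw [abs_of_nonneg (sub_nonneg.mpr (Nat.cast_le.mpr (by simp only [mem_Icc] at hi; omega)))]

theorem abs_prod_erase_sq_div_sq_sub_sq {j n : ℕ} (hj1 : 1 ≤ j) (hjn : j ≤ n) :
    |∏ i ∈ (Icc 1 n).erase j, ((i : K) ^ 2 / ((i : K) ^ 2 - (j : K) ^ 2))| =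
      2 * n.choose j / (n + j).choose j := by
  have hfactor : ∀ i : ℕ, |(i : K) ^ 2 / ((i : K) ^ 2 - (j : K) ^ 2)| =
      |(i : K) / (i - j)| * ((i : K) / (i + j)) := by
    intro i
    rw [← abs_of_nonneg (by positivity : (0 : K) ≤ i / (i + j)), ← abs_mul, div_mul_div_comm,
      ← sq, mul_comm, ← sq_sub_sq]
  rw [abs_prod, prod_congr rfl fun i _ => hfactor i, prod_mul_distrib,
    prod_erase_abs_div_sub_eq_choose hjn, prod_erase_div_add_eq_two_div_choose hj1 hjn]
  ring

end LinearOrderedField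

/-- Lagrange-coefficient product bound: for every `d ∈ ℕ` and every
`j ∈ {1, …, 2d+1}`, `|∏_{i ∈ {1,…,2d+1}, i ≠ j} i²/(i² − j²)| ≤ 2`. -/
theorem lagrange_product_bound (d j : ℕ) (hj1 : 1 ≤ j) (hj2 : j ≤ 2 * d + 1) :
    |∏ i ∈ (Finset.Icc 1 (2 * d + 1)).erase j,
        ((i : ℝ) ^ 2 / ((i : ℝ) ^ 2 - (j : ℝ) ^ 2))| ≤ 2 := by
  have hpos : (0 : ℝ) < (2 * d + 1 + j).choose j := Nat.cast_pos.mpr (Nat.choose_pos (by omega))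
  have hmono : ((2 * d + 1).choose j : ℝ) ≤ (2 * d + 1 + j).choose j :=
    Nat.cast_le.mpr (Nat.choose_le_choose j (Nat.le_add_right _ _))
  rw [abs_prod_erase_sq_div_sq_sub_sq hj1 hj2, mul_div_assoc]
  exact mul_le_of_le_one_right zero_le_two ((div_le_one hpos).mpr hmono)
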